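/- arXiv:2002.00330 — 2 statements merged into one kernel-verified Lean document; each statement's English description precedes it below -/
import Mathlib

section
/- Let K be a field of characteristic zero and let D = ∂_x + Σⱼ₌₁ⁿ (aⱼ(x)yⱼ + bⱼ(x)) ∂_{yⱼ} be a derivation of R = K[x, y₁, …, y_n]. If the equation Σⱼ γⱼ aⱼ(x) = 0 has no nonzero solution in ℕⁿ and some a_{i₀} has deg a_{i₀} ≥ 1, then Im D is not a Mathieu-Zhao subspace of R. -/
/-!
Since `D x = 1`, the image of `D` contains every power of `1`, so if it were a Mathieu-Zhao
subspace it would be all of `R`; but `y_{i₀} ∉ Im D`. To see this, view `R` as `K[x][y]` and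
suppose `D p = y_{i₀}`. Let `y^γ` be a monomial of maximal degree in `p`, with coefficient
`c ≠ 0`. Comparing coefficients of `y^γ` gives `c' + (Σⱼ γⱼ aⱼ) c = [γ = e_{i₀}]`. As
`deg c' < deg c`, the left side has degree at least `deg (Σⱼ γⱼ aⱼ)`, which is `≥ 0` for `γ ≠ 0`
(nonresonance) and `≥ 1` for `γ = e_{i₀}`: a contradiction either way. For `γ = 0` compare the
coefficients of `y_{i₀}` instead.
-/

/-- A `K`-subspace `M` of a commutative `K`-algebra is a Mathieu-Zhao subspace if whenever
`u^m ∈ M` for all `m ≥ 1`, one has `v·u^m ∈ M` for all sufficiently large `m`. -/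
def IsMathieuZhao {K R : Type*} [Field K] [CommRing R] [Algebra K R]
    (M : Submodule K R) : Prop :=
  ∀ u v : R, (∀ m : ℕ, 1 ≤ m → u ^ m ∈ M) → ∃ N : ℕ, ∀ m : ℕ, N ≤ m → v * u ^ m ∈ M

open Polynomial

theorem Polynomial.degree_le_degree_derivative_add_mul {R : Type*} [CommRing R] [NoZeroDivisors R]
    {f : R[X]} (hf : f ≠ 0) (g : R[X]) : g.degree ≤ (derivative f + g * f).degree := by
  rcases eq_or_ne g 0 with rfl | hg
  · simp
  have hlt : (derivative f).degree < (g * f).degree := by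
    calc (derivative f).degree < f.degree := degree_derivative_lt hf
      _ ≤ (g * f).degree := by rw [mul_comm]; exact degree_le_mul_left f hg
  rw [degree_add_eq_right_of_degree_lt hlt, degree_mul]
  exact le_add_of_nonneg_right (zero_le_degree_iff.2 hf)

def Derivation.conj {R A B : Type*} [CommSemiring R] [CommSemiring A] [CommSemiring B]
    [Algebra R A] [Algebra R B] (e : A ≃ₐ[R] B) (d : Derivation R A A) : Derivation R B B where
  toLinearMap := e.toLinearMap ∘ₗ d.toLinearMap ∘ₗ e.symm.toLinearMap
  map_one_eq_zero' := by simp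
  leibniz' x y := by simp

@[simp]
theorem Derivation.conj_apply {R A B : Type*} [CommSemiring R] [CommSemiring A] [CommSemiring B]
    [Algebra R A] [Algebra R B] (e : A ≃ₐ[R] B) (d : Derivation R A A) (x : B) :
    d.conj e x = e (d (e.symm x)) :=
  rfl

namespace MvPolynomial

theorem coeff_X_mul_pderiv {R σ : Type*} [CommSemiring R] (i : σ) (p : MvPolynomial σ R)
    (γ : σ →₀ ℕ) : coeff γ (X i * pderiv i p) = γ i * coeff γ p := by
  classical
  induction p using induction_on' with
  | monomial m r =>
    rw [X_mul_pderiv_monomial, coeff_smul, coeff_monomial]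
    split_ifs with h <;> simp [h, nsmul_eq_mul]
  | add p q hp hq => simp only [map_add, mul_add, coeff_add, hp, hq]

theorem coeff_derivation_of_X_eq_zero {R S σ : Type*} [CommRing R] [CommRing S] [Algebra R S]
    (δ : Derivation R (MvPolynomial σ S) (MvPolynomial σ S)) (f : S →ₗ[R] S)
    (hC : ∀ s, δ (C s) = C (f s)) (hX : ∀ i, δ (X i) = 0) (p : MvPolynomial σ S) (γ : σ →₀ ℕ) :
    coeff γ (δ p) = f (coeff γ p) := by
  classical
  induction p using induction_on generalizing γ with
  | C s => rw [hC, coeff_C, coeff_C, apply_ite f, map_zero]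
  | add p q hp hq => rw [map_add, coeff_add, coeff_add, hp, hq, map_add]
  | mul_X p i ih =>
    rw [Derivation.leibniz, hX, smul_zero, zero_add, smul_eq_mul, coeff_X_mul', coeff_mul_X',
      ih, apply_ite f, map_zero]

section LinearSystem

variable {R σ : Type*} [CommRing R] [Fintype σ] {a b : σ → R[X]}
  {d : Derivation R (MvPolynomial σ R[X]) (MvPolynomial σ R[X])}

theorem coeff_derivation_eq (hC : ∀ q, d (C q) = C (derivative q))
    (hX : ∀ j, d (X j) = C (a j) * X j + C (b j)) (p : MvPolynomial σ R[X]) (γ : σ →₀ ℕ) :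
    coeff γ (d p) = derivative (coeff γ p) + (∑ j, (γ j : R[X]) * a j) * coeff γ p
      + ∑ j, b j * (coeff (γ + Finsupp.single j 1) p * (γ j + 1)) := by
  classical
  -- `d` minus its `R[X]`-linear part `E` kills every `X j`, so it differentiates coefficientwise.
  let E : Derivation R[X] (MvPolynomial σ R[X]) (MvPolynomial σ R[X]) :=
    ∑ j, (C (a j) * X j + C (b j)) • pderiv j
  have hE_apply : ∀ q, E q = ∑ j, (C (a j) * X j + C (b j)) * pderiv j q := fun q => by
    rw [← Derivation.coeFnAddMonoidHom_apply, map_sum, Finset.sum_apply]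
    rfl
  have hE : coeff γ (E p) = (∑ j, (γ j : R[X]) * a j) * coeff γ p
      + ∑ j, b j * (coeff (γ + Finsupp.single j 1) p * (γ j + 1)) := by
    simp only [hE_apply, coeff_sum, add_mul, coeff_add, mul_assoc, coeff_C_mul, coeff_X_mul_pderiv,
      coeff_pderiv, Finset.sum_add_distrib, Finset.sum_mul]
    exact congrArg (· + _) (Finset.sum_congr rfl fun j _ => mul_left_comm _ _ _)
  have hδ : coeff γ ((d - E.restrictScalars R) p) = derivative (coeff γ p) := by
    refine coeff_derivation_of_X_eq_zero _ derivative (fun q => ?_) (fun i => ?_) p γ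
    · simp [hE_apply, hC]
    · simp [hE_apply, hX, pderiv_X, Pi.single_apply]
  rw [add_assoc, ← hE, ← hδ, Derivation.sub_apply, Derivation.coe_restrictScalars, coeff_sub]
  ring

theorem derivation_apply_ne_X [IsDomain R] (hC : ∀ q, d (C q) = C (derivative q))
    (hX : ∀ j, d (X j) = C (a j) * X j + C (b j))
    (hγ : ∀ γ : σ → ℕ, ∑ j, (γ j : R[X]) * a j = 0 → γ = 0)
    {i₀ : σ} (ha : 1 ≤ (a i₀).natDegree) (p : MvPolynomial σ R[X]) : d p ≠ X i₀ := by
  classical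
  intro hp
  have hp0 : p ≠ 0 := by
    rintro rfl
    exact X_ne_zero i₀ (by rw [← hp, map_zero])
  -- A monomial of maximal degree in `p`: the `b`-terms of `coeff_derivation_eq` vanish there.
  obtain ⟨γ, hγp, hγmax⟩ :=
    Finset.exists_max_image p.support Finsupp.degree (support_nonempty.2 hp0)
  have hvan : ∀ δ, γ.degree < δ.degree → coeff δ p = 0 := fun δ hδ =>
    notMem_support_iff.1 fun hδp => (hδ.trans_le (hγmax δ hδp)).false
  have hcoeff : ∀ δ, γ.degree ≤ δ.degree →
      coeff δ (X i₀) = derivative (coeff δ p) + (∑ j, (δ j : R[X]) * a j) * coeff δ p := by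
    intro δ hδ
    have hsucc : ∀ j, coeff (δ + Finsupp.single j 1) p = 0 := fun j =>
      hvan _ (by rw [map_add, Finsupp.degree_single]; omega)
    simp [← hp, coeff_derivation_eq hC hX, hsucc]
  by_cases hγ0 : γ = 0
  · have h := hcoeff (Finsupp.single i₀ 1) (by simp [hγ0])
    rw [hvan _ (by simp [hγ0]), coeff_X] at h
    simp at h
  have hc : coeff γ p ≠ 0 := mem_support_iff.1 hγp
  have hg : ∑ j, (γ j : R[X]) * a j ≠ 0 := fun h => hγ0 (Finsupp.coe_eq_zero.1 (hγ _ h))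
  have hdeg := Polynomial.degree_le_degree_derivative_add_mul hc (∑ j, (γ j : R[X]) * a j)
  rw [← hcoeff γ le_rfl, coeff_X] at hdeg
  split_ifs at hdeg with hγi₀
  · subst hγi₀
    simp only [Finsupp.single_apply, Nat.cast_ite, Nat.cast_one, Nat.cast_zero, ite_mul, one_mul,
      zero_mul, Finset.sum_ite_eq, Finset.mem_univ, ↓reduceIte, degree_one] at hdeg
    rw [natDegree_eq_zero_iff_degree_le_zero.2 hdeg] at ha
    omega
  · exact hg (degree_eq_bot.1 (le_bot_iff.1 (by simpa using hdeg)))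

end LinearSystem

section OptionEquivRight

variable {R σ : Type*} [CommRing R]

theorem optionEquivRight_aeval_X_none (q : R[X]) :
    optionEquivRight R σ (Polynomial.aeval (X none) q) = C q := by
  rw [← Polynomial.aeval_algHom_apply, optionEquivRight_X_none, ← algebraMap_eq,
    Polynomial.aeval_algebraMap_apply, Polynomial.aeval_X_left_apply]

theorem conj_optionEquivRight_C {D : Derivation R (MvPolynomial (Option σ) R) _}
    (hD : D (X none) = 1) (q : R[X]) :
    D.conj (optionEquivRight R σ) (C q) = C (derivative q) := by
  rw [Derivation.conj_apply, (AlgEquiv.symm_apply_eq _).2 (optionEquivRight_aeval_X_none q).symm,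
    Derivation.map_aeval, hD, smul_eq_mul, mul_one, optionEquivRight_aeval_X_none]

theorem conj_optionEquivRight_X {D : Derivation R (MvPolynomial (Option σ) R) _} {a b : R[X]}
    {j : σ}
    (hD : D (X (some j)) = Polynomial.aeval (X none) a * X (some j) + Polynomial.aeval (X none) b) :
    D.conj (optionEquivRight R σ) (X j) = C a * X j + C b := by
  rw [Derivation.conj_apply, (AlgEquiv.symm_apply_eq _).2 (optionEquivRight_X_some R σ j).symm, hD,
    map_add, map_mul, optionEquivRight_aeval_X_none, optionEquivRight_aeval_X_none,
    optionEquivRight_X_some]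

end OptionEquivRight

end MvPolynomial

theorem IsMathieuZhao.eq_top_of_one_mem {K R : Type*} [Field K] [CommRing R] [Algebra K R]
    {M : Submodule K R} (hM : IsMathieuZhao M) (h1 : (1 : R) ∈ M) : M = ⊤ := by
  refine eq_top_iff.2 fun v _ => ?_
  obtain ⟨N, hN⟩ := hM 1 v fun m _ => by rwa [one_pow]
  simpa using hN N le_rfl

theorem stmt14_general {K : Type*} [Field K] (n : ℕ)
    (a b : Fin n → Polynomial K)
    (D : Derivation K (MvPolynomial (Option (Fin n)) K) (MvPolynomial (Option (Fin n)) K))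
    (hDx : D (MvPolynomial.X none) = 1)
    (hDy : ∀ j : Fin n, D (MvPolynomial.X (some j)) =
      Polynomial.aeval (MvPolynomial.X (none : Option (Fin n))) (a j) * MvPolynomial.X (some j)
        + Polynomial.aeval (MvPolynomial.X (none : Option (Fin n))) (b j))
    (hγ : ∀ γ : Fin n → ℕ, (∑ j : Fin n, (γ j : Polynomial K) * a j) = 0 → γ = 0)
    (i₀ : Fin n) (ha : 1 ≤ (a i₀).natDegree) :
    ¬ IsMathieuZhao (LinearMap.range D.toLinearMap) := by
  intro hMZ
  obtain ⟨f, hf⟩ : MvPolynomial.X (some i₀) ∈ LinearMap.range D.toLinearMap := by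
    rw [hMZ.eq_top_of_one_mem ⟨MvPolynomial.X none, hDx⟩]
    trivial
  refine MvPolynomial.derivation_apply_ne_X (MvPolynomial.conj_optionEquivRight_C hDx)
    (fun j => MvPolynomial.conj_optionEquivRight_X (hDy j)) hγ ha
    (MvPolynomial.optionEquivRight K (Fin n) f) ?_
  rw [Derivation.conj_apply, AlgEquiv.symm_apply_apply,
    ← MvPolynomial.optionEquivRight_X_some K (Fin n) i₀]
  exact congrArg _ hf

/-- If `Σⱼ γⱼ aⱼ(x) = 0` has no nonzero solution in `ℕⁿ` and some `deg a_{i₀} ≥ 1`, then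
`Im D` is not a Mathieu-Zhao subspace, where `D = ∂x + Σⱼ (aⱼ(x)yⱼ + bⱼ(x)) ∂yⱼ`. -/
theorem stmt14 {K : Type*} [Field K] [CharZero K] (n : ℕ)
    (a b : Fin n → Polynomial K)
    (D : Derivation K (MvPolynomial (Option (Fin n)) K) (MvPolynomial (Option (Fin n)) K))
    (hDx : D (MvPolynomial.X none) = 1)
    (hDy : ∀ j : Fin n, D (MvPolynomial.X (some j)) =
      Polynomial.aeval (MvPolynomial.X (none : Option (Fin n))) (a j) * MvPolynomial.X (some j)
        + Polynomial.aeval (MvPolynomial.X (none : Option (Fin n))) (b j))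
    (hγ : ∀ γ : Fin n → ℕ, (∑ j : Fin n, (γ j : Polynomial K) * a j) = 0 → γ = 0)
    (i₀ : Fin n) (ha : 1 ≤ (a i₀).natDegree) :
    ¬ IsMathieuZhao (LinearMap.range D.toLinearMap) :=
  stmt14_general n a b D hDx hDy hγ i₀ ha
end

section
/- Let K be a field of characteristic zero and D = ∂_x + Σⱼ₌₁ʳ (a·yⱼ + bⱼ(x)) ∂_{yⱼ} a derivation of R = K[x, y₁, …, y_r] with a ∈ K* a nonzero constant and bⱼ ∈ K[x]. Then the isotropy group Aut(R)_D is nontrivial; in particular D is not simple. -/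
/-!
Since `a ≠ 0`, the operator `d/dx - a` is surjective on `K[x]`, so there are `gⱼ ∈ K[x]` with
`gⱼ' = a gⱼ + bⱼ`. In the coordinates `x, zⱼ = yⱼ - gⱼ(x)` the derivation becomes
`D x = 1, D zⱼ = a zⱼ`. Hence for every `c ∈ K*` the substitution `x ↦ x, zⱼ ↦ c zⱼ` is an
automorphism commuting with `D` (nontrivial for `c = 2`), and the principal ideal `(z₁)` is a
nonzero proper `D`-stable ideal.
-/

open Polynomial in
theorem Polynomial.exists_derivative_eq_C_mul_add {K : Type*} [Field K] {a : K} (ha : a ≠ 0)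
    (b : K[X]) : ∃ g : K[X], derivative g = C a * g + b := by
  -- induction on the nilpotency index of `derivative` at `b`: `g = h - a⁻¹ b` with `h` solving
  -- the equation for `a⁻¹ b'`
  suffices ∀ n (b : K[X]), derivative^[n] b = 0 → ∃ g, derivative g = C a * g + b from
    this _ b (iterate_derivative_eq_zero b.natDegree.lt_succ_self)
  intro n
  induction n with
  | zero => rintro b rfl; exact ⟨0, by simp⟩
  | succ n ih =>
    intro b hb
    obtain ⟨h, hh⟩ := ih (C a⁻¹ * derivative b) <| by
      rw [iterate_derivative_C_mul, ← Function.iterate_succ_apply, hb, mul_zero]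
    refine ⟨h - C a⁻¹ * b, ?_⟩
    have haa : C a * C a⁻¹ = (1 : K[X]) := by rw [← C_mul, mul_inv_cancel₀ ha, C_1]
    rw [derivative_sub, derivative_C_mul, hh]
    linear_combination b * haa

theorem Derivation.apply_mem_span_singleton_of_eq_mul {R A : Type*} [CommSemiring R] [CommRing A]
    [Algebra R A] (D : Derivation R A A) {f c : A} (hf : D f = c * f) :
    ∀ p ∈ Ideal.span {f}, D p ∈ Ideal.span {f} := by
  intro p hp
  obtain ⟨q, rfl⟩ := Ideal.mem_span_singleton'.mp hp
  exact Ideal.mem_span_singleton'.mpr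
    ⟨q * c + D q, by rw [D.leibniz, hf, smul_eq_mul, smul_eq_mul]; ring⟩

namespace MvPolynomial

theorem algHom_derivation_commute_of_forall_X {R σ B : Type*} [CommSemiring R] [CommSemiring B]
    [Algebra R B] (φ : MvPolynomial σ R →ₐ[R] B)
    (D₁ : Derivation R (MvPolynomial σ R) (MvPolynomial σ R)) (D₂ : Derivation R B B)
    (h : ∀ i, φ (D₁ (X i)) = D₂ (φ (X i))) (p : MvPolynomial σ R) :
    φ (D₁ p) = D₂ (φ p) := by
  induction p using MvPolynomial.induction_on with
  | C c => rw [← algebraMap_eq, D₁.map_algebraMap, φ.commutes, D₂.map_algebraMap, map_zero]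
  | add p q hp hq => rw [map_add, map_add, hp, hq, map_add, map_add]
  | mul_X p i hp =>
    simp only [Derivation.leibniz, smul_eq_mul, map_add, map_mul, hp, h]

variable {K ι : Type*} [Field K]

/-- The coordinate `zⱼ = yⱼ - gⱼ(x)`, where `x = X none` and `yⱼ = X (some j)`. -/
noncomputable def shiftedVar (g : ι → Polynomial K) (j : ι) : MvPolynomial (Option ι) K :=
  X (some j) - Polynomial.aeval (X none) (g j)

theorem aeval_shiftedVar {A : Type*} [CommRing A] [Algebra K A] (g : ι → Polynomial K)
    (v : Option ι → A) (j : ι) :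
    aeval v (shiftedVar g j) = v (some j) - Polynomial.aeval (v none) (g j) := by
  rw [shiftedVar, map_sub, aeval_X, ← Polynomial.aeval_algHom_apply, aeval_X]

theorem shiftedVar_ne_zero (g : ι → Polynomial K) (j : ι) : shiftedVar g j ≠ 0 := by
  intro h
  have := aeval_shiftedVar g (fun i => i.elim 0 fun k => (g k).eval 0 + 1) j
  simp [h, Polynomial.aeval_def, Polynomial.eval₂_at_zero, Polynomial.coeff_zero_eq_eval_zero]
    at this

theorem not_isUnit_shiftedVar (g : ι → Polynomial K) (j : ι) : ¬IsUnit (shiftedVar g j) := by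
  intro h
  have hv := aeval_shiftedVar g (fun i => i.elim 0 fun k => (g k).eval 0) j
  simp only [Option.elim_some, Option.elim_none, Polynomial.aeval_def, Polynomial.eval₂_at_zero,
    Algebra.algebraMap_self, RingHom.id_apply, Polynomial.coeff_zero_eq_eval_zero, sub_self] at hv
  exact not_isUnit_zero (hv ▸ h.map (aeval _))

/-- The substitution `x ↦ x, zⱼ ↦ c zⱼ`. -/
noncomputable def scaleShifted (g : ι → Polynomial K) (c : K) :
    MvPolynomial (Option ι) K →ₐ[K] MvPolynomial (Option ι) K :=
  aeval fun i => i.elim (X none) fun j => C c * shiftedVar g j + Polynomial.aeval (X none) (g j)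

section scaleShifted

variable (g : ι → Polynomial K) (c : K)

theorem scaleShifted_X_none : scaleShifted g c (X none) = X none := aeval_X _ _

theorem scaleShifted_aeval_X_none (p : Polynomial K) :
    scaleShifted g c (Polynomial.aeval (X none) p) = Polynomial.aeval (X none) p := by
  rw [← Polynomial.aeval_algHom_apply, scaleShifted_X_none]

theorem scaleShifted_shiftedVar (j : ι) :
    scaleShifted g c (shiftedVar g j) = C c * shiftedVar g j := by
  nth_rw 1 [shiftedVar]
  rw [map_sub, scaleShifted_aeval_X_none, scaleShifted, aeval_X, Option.elim_some,
    add_sub_cancel_right]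

theorem X_some_eq_shiftedVar_add (j : ι) :
    X (some j) = shiftedVar g j + Polynomial.aeval (X none) (g j) :=
  (sub_add_cancel _ _).symm

theorem scaleShifted_comp (d : K) :
    (scaleShifted g c).comp (scaleShifted g d) = scaleShifted g (c * d) := by
  refine algHom_ext fun i => ?_
  cases i with
  | none => simp only [AlgHom.comp_apply, scaleShifted_X_none]
  | some j =>
    rw [AlgHom.comp_apply, X_some_eq_shiftedVar_add g j]
    simp only [map_add, map_mul, scaleShifted_shiftedVar, scaleShifted_aeval_X_none, algHom_C,
      algebraMap_eq, mul_assoc, mul_left_comm]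

theorem scaleShifted_one : scaleShifted g 1 = AlgHom.id K _ := by
  refine algHom_ext fun i => ?_
  cases i with
  | none => exact scaleShifted_X_none g 1
  | some j => rw [scaleShifted, aeval_X, Option.elim_some, C_1, one_mul, shiftedVar,
      sub_add_cancel, AlgHom.id_apply]

end scaleShifted

noncomputable def scaleShiftedEquiv (g : ι → Polynomial K) (c : Kˣ) :
    MvPolynomial (Option ι) K ≃ₐ[K] MvPolynomial (Option ι) K :=
  AlgEquiv.ofAlgHom (scaleShifted g c) (scaleShifted g ↑c⁻¹)
    (by rw [scaleShifted_comp, Units.mul_inv, scaleShifted_one])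
    (by rw [scaleShifted_comp, Units.inv_mul, scaleShifted_one])

theorem scaleShiftedEquiv_ne_refl (g : ι → Polynomial K) {c : Kˣ} (hc : c ≠ 1) (j : ι) :
    scaleShiftedEquiv g c ≠ AlgEquiv.refl := by
  intro h
  have hz : C (c : K) * shiftedVar g j = shiftedVar g j :=
    (scaleShifted_shiftedVar g c j).symm.trans (AlgEquiv.ext_iff.mp h (shiftedVar g j))
  rw [mul_eq_right₀ (shiftedVar_ne_zero g j), ← C_1, C_inj, Units.val_eq_one] at hz
  exact hc hz

section derivation

variable {a : K} {b g : ι → Polynomial K}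
  {D : Derivation K (MvPolynomial (Option ι) K) (MvPolynomial (Option ι) K)}

theorem derivation_aeval_X_none (hDx : D (X none) = 1) (p : Polynomial K) :
    D (Polynomial.aeval (X none) p) = Polynomial.aeval (X none) (Polynomial.derivative p) := by
  rw [D.map_aeval, hDx, smul_eq_mul, mul_one]

theorem derivation_shiftedVar (hDx : D (X none) = 1)
    (hDy : ∀ j, D (X (some j)) = C a * X (some j) + Polynomial.aeval (X none) (b j))
    (hg : ∀ j, Polynomial.derivative (g j) = Polynomial.C a * g j + b j) (j : ι) :
    D (shiftedVar g j) = C a * shiftedVar g j := by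
  rw [shiftedVar, map_sub, hDy, derivation_aeval_X_none hDx, hg, map_add, map_mul,
    Polynomial.aeval_C, algebraMap_eq]
  ring

theorem scaleShifted_derivation_commute (hDx : D (X none) = 1)
    (hz : ∀ j, D (shiftedVar g j) = C a * shiftedVar g j) (c : K)
    (p : MvPolynomial (Option ι) K) :
    scaleShifted g c (D p) = D (scaleShifted g c p) := by
  refine algHom_derivation_commute_of_forall_X _ _ _ (fun i => ?_) p
  cases i with
  | none => rw [scaleShifted_X_none, hDx, map_one]
  | some j =>
    have hC : ∀ q, D (C c * q) = C c * D q := fun q => by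
      rw [← smul_eq_C_mul, D.map_smul, smul_eq_C_mul]
    rw [X_some_eq_shiftedVar_add g j]
    simp only [map_add, map_mul, hz, hC, derivation_aeval_X_none hDx, scaleShifted_shiftedVar,
      scaleShifted_aeval_X_none, algHom_C, algebraMap_eq]
    ring

end derivation

end MvPolynomial

open MvPolynomial in
/-- For `D = ∂x + Σⱼ (a·yⱼ + bⱼ(x)) ∂yⱼ` with `a ∈ K*` constant, the isotropy group
`Aut(R)_D` is nontrivial, and `D` is not simple. -/
theorem stmt19 {K : Type*} [Field K] [CharZero K] (r : ℕ) (hr : 0 < r)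
    (a : K) (ha : a ≠ 0) (b : Fin r → Polynomial K)
    (D : Derivation K (MvPolynomial (Option (Fin r)) K) (MvPolynomial (Option (Fin r)) K))
    (hDx : D (MvPolynomial.X none) = 1)
    (hDy : ∀ j : Fin r, D (MvPolynomial.X (some j)) =
      MvPolynomial.C a * MvPolynomial.X (some j) +
        Polynomial.aeval (MvPolynomial.X (none : Option (Fin r))) (b j)) :
    (∃ ρ : MvPolynomial (Option (Fin r)) K ≃ₐ[K] MvPolynomial (Option (Fin r)) K,
        (∀ p, ρ (D p) = D (ρ p)) ∧ ρ ≠ AlgEquiv.refl) ∧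
    ∃ I : Ideal (MvPolynomial (Option (Fin r)) K),
      (∀ f ∈ I, D f ∈ I) ∧ I ≠ ⊥ ∧ I ≠ ⊤ := by
  choose g hg using fun j => Polynomial.exists_derivative_eq_C_mul_add ha (b j)
  have hz := derivation_shiftedVar hDx hDy hg
  let j₀ : Fin r := ⟨0, hr⟩
  have htwo : Units.mk0 (2 : K) two_ne_zero ≠ 1 := by
    rw [Ne, ← Units.val_eq_one, Units.val_mk0]; exact OfNat.ofNat_ne_one 2
  refine ⟨⟨scaleShiftedEquiv g (Units.mk0 2 two_ne_zero),
      scaleShifted_derivation_commute hDx hz _, scaleShiftedEquiv_ne_refl g htwo j₀⟩,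
    Ideal.span {shiftedVar g j₀}, D.apply_mem_span_singleton_of_eq_mul (hz j₀), ?_, ?_⟩
  · exact Ideal.span_singleton_eq_bot.not.mpr (shiftedVar_ne_zero g j₀)
  · exact Ideal.span_singleton_eq_top.not.mpr (not_isUnit_shiftedVar g j₀)
end
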